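/- Let n ≥ 1 and k ≥ 1 be integers and m ≥ 1. For each player j ∈ {1,…,n}, let v_j be a multi-unit valuation on m items that is k-minded with respect to a set K_j ⊆ {1,…,m} with |K_j| ≤ k. Fix a player i and let v̄_i be a multi-unit valuation on m items, k-minded with respect to K_i, such that v̄_i(s̄) − v̄_i(s) ≥ v_i(s̄) − v_i(s) for all s̄ > s in {0,…,m}. Let δ > 0 and let δ̄ be a multiple of δ with δ̄ ≥ 4nkδ. Let T ⊆ {1,…,n}, and define u_j = v_j^δ for j ∉ T and u_j(s) = v_j(s) + |{ x ∈ K_j : x ≤ s }|·2δkn for j ∈ T (where v^δ denotes the δ-marginal-rounded valuation). Suppose the allocation s = (s_1,…,s_n) maximizes Σ_{j=1}^n u_j(s_j) over all allocations of m items among n players. Define ū_i(t) = v̄_i(t) + |{ x ∈ K_i : x ≤ t }|·2δ̄kn. Then for every allocation ŝ = (ŝ_1,…,ŝ_n) with ŝ_i < s_i and ŝ_i, s_i ∈ K_i ∪ {0}, it holds that ū_i(ŝ_i) + Σ_{j≠i} v_j^{δ̄}(ŝ_j) < ū_i(s_i) + Σ_{j≠i} v_j^{δ̄}(s_j). -/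

import Mathlib

/-- `x` rounded down to the nearest multiple of `δ`. -/
noncomputable def roundDown (δ x : ℝ) : ℝ := δ * ⌊x / δ⌋

/-- The `δ`-marginal-rounded valuation of a multi-unit valuation `v`. -/
noncomputable def marginalRound (δ : ℝ) (v : ℕ → ℝ) (s : ℕ) : ℝ :=
  ∑ j ∈ Finset.Icc 1 s, roundDown δ (v j - v (j - 1))

/-!
Each modified valuation `u_j` is within `k δ̄ / 2` of `v_j` (the bonuses add at most
`k · 2δkn`, rounding at `δ` removes at most `kδ`), so `s` maximizes `Σ v_j` up to `n k δ̄`;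
rounding at `δ̄` changes each `v_j` by at most `k δ̄`. Passing from `s` to `ŝ`, the players
`j ≠ i` therefore gain at most
`v_i(s_i) - v_i(ŝ_i) + (2n - 1) k δ̄ ≤ v̄_i(s_i) - v̄_i(ŝ_i) + (2n - 1) k δ̄`,
while `ū_i` loses `v̄_i(s_i) - v̄_i(ŝ_i)` plus the bonus `2 δ̄ k n` of the breakpoint `s_i ∈ K_i`.
-/

open Finset

lemma roundDown_le {δ : ℝ} (hδ : 0 < δ) (x : ℝ) : roundDown δ x ≤ x := by
  rw [roundDown, ← le_div_iff₀' hδ]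
  exact Int.floor_le _

lemma sub_lt_roundDown {δ : ℝ} (hδ : 0 < δ) (x : ℝ) : x - δ < roundDown δ x := by
  have h := mul_lt_mul_of_pos_left (Int.sub_one_lt_floor (x / δ)) hδ
  rwa [mul_sub, mul_div_cancel₀ x hδ.ne', mul_one] at h

@[simp]
lemma roundDown_zero (δ : ℝ) : roundDown δ 0 = 0 := by
  simp [roundDown]

@[simp]
lemma marginalRound_zero (δ : ℝ) (v : ℕ → ℝ) : marginalRound δ v 0 = 0 := by
  simp [marginalRound]

lemma marginalRound_succ (δ : ℝ) (v : ℕ → ℝ) (s : ℕ) :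
    marginalRound δ v (s + 1) = marginalRound δ v s + roundDown δ (v (s + 1) - v s) := by
  rw [marginalRound, marginalRound, sum_Icc_succ_top (Nat.le_add_left 1 s)]
  simp

lemma marginalRound_le {δ : ℝ} (hδ : 0 < δ) {v : ℕ → ℝ} (hv0 : v 0 = 0) (s : ℕ) :
    marginalRound δ v s ≤ v s := by
  induction s with
  | zero => simp [hv0]
  | succ s ih => linarith [marginalRound_succ δ v s, roundDown_le hδ (v (s + 1) - v s)]

lemma card_filter_le_lt_of_mem {K : Finset ℕ} {a b : ℕ} (hab : a < b) (hb : b ∈ K) :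
    #(K.filter (· ≤ a)) < #(K.filter (· ≤ b)) :=
  card_lt_card ⟨monotone_filter_right K fun _ _ hx => hx.trans hab.le,
    fun h => (hab.trans_le (mem_filter.1 (h (mem_filter.2 ⟨hb, le_rfl⟩))).2).false⟩

def IsKMinded (K : Finset ℕ) (m : ℕ) (v : ℕ → ℝ) : Prop :=
  ∀ s, 1 ≤ s → s ≤ m → s ∉ K → v s = v (s - 1)

section KMinded

variable {δ : ℝ} {v : ℕ → ℝ} {K : Finset ℕ} {k m : ℕ}

lemma sub_card_filter_mul_le_marginalRound (hδ : 0 < δ) (hv0 : v 0 = 0) (hkm : IsKMinded K m v)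
    {s : ℕ} (hs : s ≤ m) : v s - #(K.filter (· ≤ s)) * δ ≤ marginalRound δ v s := by
  induction s with
  | zero =>
    simp only [hv0, marginalRound_zero, zero_sub, neg_nonpos]
    positivity
  | succ s ih =>
    specialize ih (by omega)
    rw [marginalRound_succ]
    by_cases hK : s + 1 ∈ K
    · have hcard : ((#(K.filter (· ≤ s)) : ℝ) + 1) * δ ≤ #(K.filter (· ≤ s + 1)) * δ := by
        gcongr; exact_mod_cast card_filter_le_lt_of_mem (lt_add_one s) hK
      linarith [sub_lt_roundDown hδ (v (s + 1) - v s)]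
    · have hcard : (#(K.filter (· ≤ s)) : ℝ) * δ ≤ #(K.filter (· ≤ s + 1)) * δ := by
        gcongr; exact s.le_succ
      rw [hkm (s + 1) s.succ_pos hs hK, Nat.add_sub_cancel, sub_self, roundDown_zero]
      linarith

lemma abs_marginalRound_sub_le (hδ : 0 < δ) (hv0 : v 0 = 0) (hK : #K ≤ k)
    (hkm : IsKMinded K m v) {s : ℕ} (hs : s ≤ m) : |marginalRound δ v s - v s| ≤ k * δ := by
  have hcard : (#(K.filter (· ≤ s)) : ℝ) * δ ≤ k * δ := by
    gcongr; exact_mod_cast (card_filter_le K _).trans hK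
  rw [abs_sub_comm, abs_of_nonneg (sub_nonneg.2 (marginalRound_le hδ hv0 s))]
  linarith [sub_card_filter_mul_le_marginalRound hδ hv0 hkm hs]

lemma marginalRound_sub_marginalRound_le (hδ : 0 < δ) (hv0 : v 0 = 0) (hK : #K ≤ k)
    (hkm : IsKMinded K m v) (a : ℕ) {b : ℕ} (hb : b ≤ m) :
    marginalRound δ v a - marginalRound δ v b ≤ v a - v b + k * δ := by
  have hb' := (abs_sub_le_iff.1 (abs_marginalRound_sub_le hδ hv0 hK hkm hb)).2
  linarith [marginalRound_le hδ hv0 a]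

end KMinded

def withBonus (K : Finset ℕ) (β : ℝ) (v : ℕ → ℝ) (s : ℕ) : ℝ :=
  v s + #(K.filter (· ≤ s)) * β

lemma abs_withBonus_sub_le {K : Finset ℕ} {k : ℕ} (hK : #K ≤ k) {β : ℝ} (hβ : 0 ≤ β)
    (v : ℕ → ℝ) (s : ℕ) : |withBonus K β v s - v s| ≤ k * β := by
  rw [withBonus, add_sub_cancel_left, abs_of_nonneg (by positivity)]
  gcongr
  exact_mod_cast (card_filter_le K _).trans hK

lemma withBonus_sub_withBonus_le {K : Finset ℕ} {a b : ℕ} (hab : a < b) (hb : b ∈ K)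
    {β : ℝ} (hβ : 0 ≤ β) (v : ℕ → ℝ) :
    withBonus K β v a - withBonus K β v b ≤ v a - v b - β := by
  have hcard : ((#(K.filter (· ≤ a)) : ℝ) + 1) * β ≤ #(K.filter (· ≤ b)) * β := by
    gcongr; exact_mod_cast card_filter_le_lt_of_mem hab hb
  rw [withBonus, withBonus]
  linarith

lemma abs_ite_withBonus_marginalRound_sub_le {P : Prop} [Decidable P] {δ β ε : ℝ}
    (hδ : 0 < δ) (hβ : 0 ≤ β) {v : ℕ → ℝ} (hv0 : v 0 = 0) {K : Finset ℕ} {k m : ℕ}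
    (hK : #K ≤ k) (hkm : IsKMinded K m v) {s : ℕ} (hs : s ≤ m)
    (hβε : k * β ≤ ε) (hδε : k * δ ≤ ε) :
    |(if P then withBonus K β v s else marginalRound δ v s) - v s| ≤ ε := by
  split_ifs
  · exact (abs_withBonus_sub_le hK hβ v s).trans hβε
  · exact (abs_marginalRound_sub_le hδ hv0 hK hkm hs).trans hδε

lemma sum_le_sum_add_of_sum_le_of_abs_sub_le {ι : Type*} (S : Finset ι) {u w : ι → ℕ → ℝ}
    {s t : ι → ℕ} {ε : ℝ} (hopt : ∑ j ∈ S, u j (t j) ≤ ∑ j ∈ S, u j (s j))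
    (hs : ∀ j ∈ S, |u j (s j) - w j (s j)| ≤ ε)
    (ht : ∀ j ∈ S, |u j (t j) - w j (t j)| ≤ ε) :
    ∑ j ∈ S, w j (t j) ≤ ∑ j ∈ S, w j (s j) + #S * (2 * ε) := by
  have hwt : ∑ j ∈ S, w j (t j) ≤ ∑ j ∈ S, (u j (t j) + ε) :=
    sum_le_sum fun j hj => by linarith [(abs_sub_le_iff.1 (ht j hj)).2]
  have hus : ∑ j ∈ S, (u j (s j) + ε) ≤ ∑ j ∈ S, (w j (s j) + 2 * ε) :=
    sum_le_sum fun j hj => by linarith [(abs_sub_le_iff.1 (hs j hj)).1]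
  simp only [sum_add_distrib, sum_const, nsmul_eq_mul] at hwt hus
  linarith

theorem monotonicity_case_rounding_increases_general
    (n k m : ℕ)
    (v : Fin n → ℕ → ℝ)
    (hv0 : ∀ j, v j 0 = 0)
    (K : Fin n → Finset ℕ)
    (hKcard : ∀ j, (K j).card ≤ k)
    (hkm : ∀ j, ∀ s : ℕ, 1 ≤ s → s ≤ m → s ∉ K j → v j s = v j (s - 1))
    (i : Fin n) (vb : ℕ → ℝ)
    (hdom : ∀ s t : ℕ, s < t → t ≤ m → v i t - v i s ≤ vb t - vb s)
    (δ δb : ℝ) (hδ : 0 < δ)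
    (hδb : 4 * (n : ℝ) * (k : ℝ) * δ ≤ δb)
    (T : Finset (Fin n))
    (u : Fin n → ℕ → ℝ)
    (hu : ∀ j s, u j s =
      if j ∈ T then
        v j s + (((K j).filter (fun x => x ≤ s)).card : ℝ) * (2 * δ * k * n)
      else marginalRound δ (v j) s)
    (salloc : Fin n → ℕ) (hsalloc : ∑ j, salloc j ≤ m)
    (hmax : ∀ t : Fin n → ℕ, (∑ j, t j ≤ m) → ∑ j, u j (t j) ≤ ∑ j, u j (salloc j))
    (ub : ℕ → ℝ)
    (hub : ∀ t : ℕ, ub t =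
      vb t + (((K i).filter (fun x => x ≤ t)).card : ℝ) * (2 * δb * k * n)) :
    ∀ sh : Fin n → ℕ, (∑ j, sh j ≤ m) → sh i < salloc i →
      (sh i ∈ K i ∨ sh i = 0) → (salloc i ∈ K i ∨ salloc i = 0) →
      ub (sh i) + ∑ j ∈ Finset.univ.erase i, marginalRound δb (v j) (sh j) <
        ub (salloc i) + ∑ j ∈ Finset.univ.erase i, marginalRound δb (v j) (salloc j) := by
  intro sh hshm hlt _ hsaK
  replace hsaK : salloc i ∈ K i := hsaK.resolve_right (by omega)
  have hk : (1 : ℝ) ≤ k := by exact_mod_cast (card_pos.2 ⟨_, hsaK⟩).trans_le (hKcard i)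
  have hn : (1 : ℝ) ≤ n := by exact_mod_cast i.pos
  have hδδb : 2 * δ ≤ δb := by
    nlinarith [mul_le_mul hn hk zero_le_one (by positivity : (0 : ℝ) ≤ n)]
  have hδb0 : 0 < δb := by linarith
  have hle : ∀ {t : Fin n → ℕ}, ∑ j, t j ≤ m → ∀ j, t j ≤ m := fun h j =>
    (single_le_sum_of_canonicallyOrdered (mem_univ j)).trans h
  have happrox : ∀ j, ∀ t ≤ m, |u j t - v j t| ≤ k * δb / 2 := fun j t ht => by
    rw [hu]
    exact abs_ite_withBonus_marginalRound_sub_le hδ (by positivity) (hv0 j) (hKcard j) (hkm j) ht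
      (by linear_combination (k / 2 : ℝ) * hδb) (by nlinarith)
  have hwelfare := sum_le_sum_add_of_sum_le_of_abs_sub_le univ (hmax sh hshm)
    (fun j _ => happrox j _ (hle hsalloc j)) (fun j _ => happrox j _ (hle hshm j))
  rw [← add_sum_erase _ _ (mem_univ i), ← add_sum_erase _ _ (mem_univ i)] at hwelfare
  have hround : ∑ j ∈ univ.erase i,
      (marginalRound δb (v j) (sh j) - marginalRound δb (v j) (salloc j)) ≤
      ∑ j ∈ univ.erase i, (v j (sh j) - v j (salloc j) + k * δb) :=
    sum_le_sum fun j _ => marginalRound_sub_marginalRound_le hδb0 (hv0 j)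
      (hKcard j) (hkm j) (sh j) (hle hsalloc j)
  have hreward : ub (sh i) - ub (salloc i) ≤ vb (sh i) - vb (salloc i) - 2 * δb * k * n := by
    rw [hub, hub]
    exact withBonus_sub_withBonus_le hlt hsaK (by positivity) vb
  have hcard : (#(univ.erase i) : ℝ) < n := by
    exact_mod_cast (card_erase_lt_of_mem (mem_univ i)).trans_eq (card_fin n)
  simp only [sum_sub_distrib, sum_add_distrib, sum_const, nsmul_eq_mul, card_univ,
    Fintype.card_fin] at hround hwelfare
  have hkδb : 0 < k * δb := by positivity
  linarith [hdom _ _ hlt (hle hsalloc i), mul_lt_mul_of_pos_right hcard hkδb]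

/-- Case I of the monotonicity argument. If `s` maximizes the
modified welfare `Σ u_j` at rounding parameter `δ`, `v̄_i` dominates `v_i`
marginally, and `δ̄` is a multiple of `δ` with `δ̄ ≥ 4nkδ`, then at rounding
parameter `δ̄` with reward valuation `ū_i` for player `i`, every allocation `ŝ`
giving player `i` fewer items (with `ŝ_i, s_i ∈ K_i ∪ {0}`) has strictly
smaller modified welfare than `s`. -/
theorem monotonicity_case_rounding_increases
    (n k m : ℕ) (hn : 1 ≤ n) (hk : 1 ≤ k) (hm : 1 ≤ m)
    (v : Fin n → ℕ → ℝ)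
    (hv0 : ∀ j, v j 0 = 0)
    (hvmono : ∀ j, ∀ s t : ℕ, s ≤ t → t ≤ m → v j s ≤ v j t)
    (K : Fin n → Finset ℕ)
    (hKsub : ∀ j, ∀ x ∈ K j, 1 ≤ x ∧ x ≤ m)
    (hKcard : ∀ j, (K j).card ≤ k)
    (hkm : ∀ j, ∀ s : ℕ, 1 ≤ s → s ≤ m → s ∉ K j → v j s = v j (s - 1))
    (i : Fin n) (vb : ℕ → ℝ)
    (hvb0 : vb 0 = 0)
    (hvbmono : ∀ s t : ℕ, s ≤ t → t ≤ m → vb s ≤ vb t)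
    (hvbkm : ∀ s : ℕ, 1 ≤ s → s ≤ m → s ∉ K i → vb s = vb (s - 1))
    (hdom : ∀ s t : ℕ, s < t → t ≤ m → v i t - v i s ≤ vb t - vb s)
    (δ δb : ℝ) (hδ : 0 < δ) (hmul : ∃ c : ℕ, δb = (c : ℝ) * δ)
    (hδb : 4 * (n : ℝ) * (k : ℝ) * δ ≤ δb)
    (T : Finset (Fin n))
    (u : Fin n → ℕ → ℝ)
    (hu : ∀ j s, u j s =
      if j ∈ T then
        v j s + (((K j).filter (fun x => x ≤ s)).card : ℝ) * (2 * δ * k * n)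
      else marginalRound δ (v j) s)
    (salloc : Fin n → ℕ) (hsalloc : ∑ j, salloc j ≤ m)
    (hmax : ∀ t : Fin n → ℕ, (∑ j, t j ≤ m) → ∑ j, u j (t j) ≤ ∑ j, u j (salloc j))
    (ub : ℕ → ℝ)
    (hub : ∀ t : ℕ, ub t =
      vb t + (((K i).filter (fun x => x ≤ t)).card : ℝ) * (2 * δb * k * n)) :
    ∀ sh : Fin n → ℕ, (∑ j, sh j ≤ m) → sh i < salloc i →
      (sh i ∈ K i ∨ sh i = 0) → (salloc i ∈ K i ∨ salloc i = 0) →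
      ub (sh i) + ∑ j ∈ Finset.univ.erase i, marginalRound δb (v j) (sh j) <
        ub (salloc i) + ∑ j ∈ Finset.univ.erase i, marginalRound δb (v j) (salloc j) :=
  monotonicity_case_rounding_increases_general n k m v hv0 K hKcard hkm i vb hdom δ δb hδ hδb T u hu
    salloc hsalloc hmax ub hub
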